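/- arXiv:1607.07194 — 2 statements merged into one kernel-verified Lean document; each statement's English description precedes it below -/
import Mathlib

section
/- Let f(λ) = ∑ᵢ arctan λᵢ on the set E = {λ ∈ ℝⁿ : ∑ᵢ arctan λᵢ ≥ (n−2)π/2 + δ} for some δ > 0. Then there exists A > 0 (depending only on δ and n) such that g(λ) = −exp(−A f(λ)) is a concave function on E; equivalently, the Hessian matrix ∂²g/∂λᵢ∂λⱼ = −A e^{−Af} (A + 2λᵢδ_{ij})/((1+λᵢ²)(1+λⱼ²)) is negative semidefinite at every point of E. -/
open Real Finset

/-!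
Along a line `t ↦ λ + t v`, with `uᵢ = vᵢ / (1 + λᵢ²)`, the second derivative of `G (∑ arctan λᵢ)`
is `G'' (∑ uᵢ)² - 2 G' ∑ λᵢ uᵢ²`. When `G'' = -2 μ G'` and `G' ≤ 0` this is nonnegative as soon as
`∑ λᵢ uᵢ² + μ (∑ uᵢ)² ≥ 0`, which holds whenever `∑ arctan λᵢ + arctan μ > (n - 1) π / 2`: that
is the statement that `∑ λᵢ wᵢ²` is nonnegative on the hyperplane `∑ wᵢ = 0` for `n + 1` numbers
whose arctangents sum above `(n - 1) π / 2`. For such numbers at most one, `λₖ`, is negative, and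
subadditivity of `arctan` on `[0, ∞)` gives `∑_{i ≠ k} 1 / λᵢ ≤ 1 / |λₖ|`, so Cauchy–Schwarz
concludes.

For `g = -exp (-A f)` this is used with `μ = A / 2`, where `arctan (A / 2) > π / 2 - δ`.
Convexity of `E` itself is proved by induction on `n`: `{f ≥ c}` with `c > (n - 2) π / 2` is the
epigraph of `z ↦ tan (c - f z)` over `{f > c - π / 2}` in one dimension less, and that function is
convex by the same computation with `μ = tan (c - f z)`.
-/

theorem Real.arctan_add_le_add_arctan {a b : ℝ} (ha : 0 ≤ a) (hb : 0 ≤ b) :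
    arctan (a + b) ≤ arctan a + arctan b := by
  by_cases hab : a * b < 1
  · rw [arctan_add hab]
    refine arctan_mono ((le_div_iff₀ (by linarith)).2 ?_)
    nlinarith [mul_nonneg (add_nonneg ha hb) (mul_nonneg ha hb)]
  · have ha' : 0 < a := ha.lt_of_ne (by rintro rfl; simp at hab)
    have hb' : a⁻¹ ≤ b := (inv_le_iff_one_le_mul₀' ha').2 (not_lt.1 hab)
    calc arctan (a + b) ≤ π / 2 := (arctan_lt_pi_div_two _).le
      _ = arctan a + arctan a⁻¹ := by rw [arctan_inv_of_pos ha']; ring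
      _ ≤ arctan a + arctan b := by gcongr

theorem Real.arctan_sum_le_sum_arctan {ι : Type*} (s : Finset ι) {a : ι → ℝ}
    (ha : ∀ i ∈ s, 0 ≤ a i) : arctan (∑ i ∈ s, a i) ≤ ∑ i ∈ s, arctan (a i) := by
  induction s using Finset.cons_induction with
  | empty => simp
  | cons j s hj ih =>
    rw [forall_mem_cons] at ha
    rw [sum_cons, sum_cons]
    calc arctan (a j + ∑ i ∈ s, a i) ≤ arctan (a j) + arctan (∑ i ∈ s, a i) :=
          arctan_add_le_add_arctan ha.1 (sum_nonneg ha.2)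
      _ ≤ arctan (a j) + ∑ i ∈ s, arctan (a i) := by gcongr; exact ih ha.2

theorem Finset.mul_sq_sum_le_sum_mul_sq {ι : Type*} {s : Finset ι} {lam w : ι → ℝ} {μ : ℝ}
    (hlam : ∀ i ∈ s, 0 < lam i) (hμ : 0 ≤ μ) (h : μ * ∑ i ∈ s, (lam i)⁻¹ ≤ 1) :
    μ * (∑ i ∈ s, w i) ^ 2 ≤ ∑ i ∈ s, lam i * w i ^ 2 := by
  have hcs : (∑ i ∈ s, w i) ^ 2 ≤ (∑ i ∈ s, (lam i)⁻¹) * ∑ i ∈ s, lam i * w i ^ 2 :=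
    sum_sq_le_sum_mul_sum_of_sq_le_mul s (fun i hi => (inv_pos.2 (hlam i hi)).le)
      (fun i hi => mul_nonneg (hlam i hi).le (sq_nonneg _))
      (fun i hi => by rw [inv_mul_cancel_left₀ (hlam i hi).ne'])
  calc μ * (∑ i ∈ s, w i) ^ 2
      ≤ (μ * ∑ i ∈ s, (lam i)⁻¹) * ∑ i ∈ s, lam i * w i ^ 2 := by
        rw [mul_assoc]; exact mul_le_mul_of_nonneg_left hcs hμ
    _ ≤ ∑ i ∈ s, lam i * w i ^ 2 :=
        mul_le_of_le_one_left (sum_nonneg fun i hi => mul_nonneg (hlam i hi).le (sq_nonneg _)) h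

theorem sum_arctan_le_card_mul {ι : Type*} [Fintype ι] (x : ι → ℝ) :
    ∑ i, arctan (x i) ≤ Fintype.card ι * (π / 2) := by
  simpa using sum_le_card_nsmul univ (fun i => arctan (x i)) (π / 2)
    fun i _ => (arctan_lt_pi_div_two _).le

theorem sum_mul_sq_nonneg_of_lt_sum_arctan {ι : Type*} [Fintype ι] {lam w : ι → ℝ}
    (h : ((Fintype.card ι : ℝ) - 2) * (π / 2) < ∑ i, arctan (lam i)) (hw : ∑ i, w i = 0) :
    0 ≤ ∑ i, lam i * w i ^ 2 := by
  classical
  by_cases hnn : ∀ i, 0 ≤ lam i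
  · exact sum_nonneg fun i _ => mul_nonneg (hnn i) (sq_nonneg _)
  obtain ⟨k, hk⟩ := not_forall.1 hnn
  rw [not_le] at hk
  set s := univ.erase k
  -- with `θᵢ = π/2 - arctan λᵢ ∈ (0, π)` the hypothesis reads `∑ θᵢ < π`
  have hdeficit : ∑ i ∈ s, (π / 2 - arctan (lam i)) < π / 2 + arctan (lam k) := by
    have htotal : ∑ i, (π / 2 - arctan (lam i)) < π := by
      rw [sum_sub_distrib, sum_const, card_univ, nsmul_eq_mul]; linarith
    have := add_sum_erase univ (fun i => π / 2 - arctan (lam i)) (mem_univ k)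
    linarith
  have hpos : ∀ i ∈ s, 0 < lam i := by
    intro i hi
    have := single_le_sum (fun j _ => (sub_pos.2 (arctan_lt_pi_div_two (lam j))).le) hi
    have := arctan_lt_zero.2 hk
    exact arctan_pos.1 (by linarith)
  have hinv : -lam k * ∑ i ∈ s, (lam i)⁻¹ ≤ 1 := by
    have harctan : arctan (∑ i ∈ s, (lam i)⁻¹) < arctan (-lam k)⁻¹ :=
      calc arctan (∑ i ∈ s, (lam i)⁻¹) ≤ ∑ i ∈ s, arctan (lam i)⁻¹ :=
            arctan_sum_le_sum_arctan s fun i hi => (inv_pos.2 (hpos i hi)).le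
        _ = ∑ i ∈ s, (π / 2 - arctan (lam i)) :=
            sum_congr rfl fun i hi => arctan_inv_of_pos (hpos i hi)
        _ < π / 2 + arctan (lam k) := hdeficit
        _ = arctan (-lam k)⁻¹ := by rw [arctan_inv_of_pos (neg_pos.2 hk), arctan_neg]; ring
    calc -lam k * ∑ i ∈ s, (lam i)⁻¹ ≤ -lam k * (-lam k)⁻¹ := by
          gcongr
          · linarith
          · exact (arctan_lt_arctan_iff.1 harctan).le
      _ = 1 := mul_inv_cancel₀ (by linarith)
  have hwk : w k = -∑ i ∈ s, w i := by
    linarith [add_sum_erase univ w (mem_univ k)]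
  calc 0 ≤ ∑ i ∈ s, lam i * w i ^ 2 + lam k * (∑ i ∈ s, w i) ^ 2 := by
        linarith [mul_sq_sum_le_sum_mul_sq (w := w) hpos (by linarith) hinv]
    _ = ∑ i, lam i * w i ^ 2 := by
        rw [← add_sum_erase univ _ (mem_univ k), hwk]; ring

theorem sum_mul_sq_add_mul_sq_sum_nonneg_of_lt_sum_arctan {ι : Type*} [Fintype ι]
    {lam : ι → ℝ} {μ : ℝ}
    (h : ((Fintype.card ι : ℝ) - 1) * (π / 2) < ∑ i, arctan (lam i) + arctan μ) (u : ι → ℝ) :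
    0 ≤ ∑ i, lam i * u i ^ 2 + μ * (∑ i, u i) ^ 2 := by
  have := sum_mul_sq_nonneg_of_lt_sum_arctan (lam := fun o : Option ι => o.elim μ lam)
    (w := fun o => o.elim (-∑ i, u i) u)
    (by simp only [Fintype.sum_option, Fintype.card_option, Option.elim]; push_cast; linarith)
    (by rw [Fintype.sum_option]; simp)
  rw [Fintype.sum_option] at this
  simpa [add_comm] using this

theorem convexOn_of_forall_convexOn_Icc {𝕜 E β : Type*} [Field 𝕜] [LinearOrder 𝕜]
    [IsStrictOrderedRing 𝕜] [AddCommGroup E] [Module 𝕜 E] [AddCommMonoid β] [PartialOrder β]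
    [Module 𝕜 β] {s : Set E} {f : E → β} (hs : Convex 𝕜 s)
    (h : ∀ x ∈ s, ∀ y ∈ s, ConvexOn 𝕜 (Set.Icc 0 1) fun t : 𝕜 => f (x + t • (y - x))) :
    ConvexOn 𝕜 s f := by
  refine ⟨hs, fun x hx y hy a b ha hb hab => ?_⟩
  have := (h x hx y hy).2 (Set.left_mem_Icc.2 zero_le_one) (Set.right_mem_Icc.2 zero_le_one)
    ha hb hab
  obtain rfl : a = 1 - b := by linear_combination hab
  simp only [smul_eq_mul, mul_zero, mul_one, zero_add, zero_smul, add_zero, one_smul,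
    add_sub_cancel] at this
  rwa [show x + b • (y - x) = (1 - b) • x + b • y by module] at this

section Line

variable {ι : Type*} [Fintype ι] (x v : ι → ℝ) (t : ℝ)

theorem hasDerivAt_sum_arctan_line :
    HasDerivAt (fun t => ∑ i, arctan (x i + t * v i))
      (∑ i, v i / (1 + (x i + t * v i) ^ 2)) t := by
  refine HasDerivAt.fun_sum fun i _ => ?_
  have hw : HasDerivAt (fun t => x i + t * v i) (v i) t := by
    simpa using ((hasDerivAt_id t).mul_const (v i)).const_add (x i)
  exact hw.arctan.congr_deriv (by ring)

theorem hasDerivAt_sum_div_one_add_sq_line :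
    HasDerivAt (fun t => ∑ i, v i / (1 + (x i + t * v i) ^ 2))
      (-2 * ∑ i, (x i + t * v i) * (v i / (1 + (x i + t * v i) ^ 2)) ^ 2) t := by
  rw [mul_sum]
  refine HasDerivAt.fun_sum fun i _ => ?_
  have hw : HasDerivAt (fun t => x i + t * v i) (v i) t := by
    simpa using ((hasDerivAt_id t).mul_const (v i)).const_add (x i)
  refine ((hasDerivAt_const t (v i)).div ((hw.fun_pow 2).const_add 1)
    (by positivity)).congr_deriv ?_
  field_simp
  ring

end Line

theorem convexOn_comp_sum_arctan {ι : Type*} [Fintype ι] {s : Set (ι → ℝ)} (hs : Convex ℝ s)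
    {U : Set ℝ} (hsU : ∀ x ∈ s, ∑ i, arctan (x i) ∈ U) {G G' μ : ℝ → ℝ}
    (hG : ∀ y ∈ U, HasDerivAt G (G' y) y) (hG' : ∀ y ∈ U, HasDerivAt G' (-2 * μ y * G' y) y)
    (hG'_nonpos : ∀ y ∈ U, G' y ≤ 0)
    (hμ : ∀ y ∈ U, ((Fintype.card ι : ℝ) - 1) * (π / 2) < y + arctan (μ y)) :
    ConvexOn ℝ s fun x => G (∑ i, arctan (x i)) := by
  refine convexOn_of_forall_convexOn_Icc hs fun x hx y hy => ?_
  simp only [Pi.add_apply, Pi.smul_apply, smul_eq_mul]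
  set v := y - x
  set ψ := fun t => ∑ i, arctan (x i + t * v i)
  set ψ' := fun t => ∑ i, v i / (1 + (x i + t * v i) ^ 2)
  set ψ'' := fun t => -2 * ∑ i, (x i + t * v i) * (v i / (1 + (x i + t * v i) ^ 2)) ^ 2
  have hU : ∀ t ∈ Set.Icc (0 : ℝ) 1, ψ t ∈ U := fun t ht => by
    have := hsU _ (hs.add_smul_sub_mem hx hy ht)
    simpa only [Pi.add_apply, Pi.smul_apply, smul_eq_mul] using this
  have hd1 : ∀ t ∈ Set.Icc (0 : ℝ) 1, HasDerivAt (fun t => G (ψ t)) (G' (ψ t) * ψ' t) t :=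
    fun t ht => (hG _ (hU t ht)).comp t (hasDerivAt_sum_arctan_line x v t)
  have hd2 : ∀ t ∈ Set.Icc (0 : ℝ) 1, HasDerivAt (fun t => G' (ψ t) * ψ' t)
      (-2 * μ (ψ t) * G' (ψ t) * ψ' t * ψ' t + G' (ψ t) * ψ'' t) t :=
    fun t ht => ((hG' _ (hU t ht)).comp t (hasDerivAt_sum_arctan_line x v t)).mul
      (hasDerivAt_sum_div_one_add_sq_line x v t)
  refine convexOn_of_hasDerivWithinAt2_nonneg (convex_Icc 0 1)
    (fun t ht => (hd1 t ht).continuousAt.continuousWithinAt)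
    (fun t ht => (hd1 t (interior_subset ht)).hasDerivWithinAt)
    (fun t ht => (hd2 t (interior_subset ht)).hasDerivWithinAt) fun t ht => ?_
  have htU := hU t (interior_subset ht)
  have hform := sum_mul_sq_add_mul_sq_sum_nonneg_of_lt_sum_arctan (hμ _ htU)
    fun i => v i / (1 + (x i + t * v i) ^ 2)
  have := hG'_nonpos _ htU
  calc (0 : ℝ) ≤ -2 * G' (ψ t) * (∑ i, (x i + t * v i) * (v i / (1 + (x i + t * v i) ^ 2)) ^ 2
        + μ (ψ t) * ψ' t ^ 2) := mul_nonneg (by linarith) hform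
    _ = _ := by ring

theorem convexOn_tan_sub_sum_arctan {ι : Type*} [Fintype ι] {c : ℝ}
    (hc : ((Fintype.card ι : ℝ) - 1) * (π / 2) < c)
    (hD : Convex ℝ {x : ι → ℝ | c - π / 2 < ∑ i, arctan (x i)}) :
    ConvexOn ℝ {x : ι → ℝ | c - π / 2 < ∑ i, arctan (x i)}
      fun x => tan (c - ∑ i, arctan (x i)) := by
  have hU : ∀ x ∈ {x : ι → ℝ | c - π / 2 < ∑ i, arctan (x i)},
      ∑ i, arctan (x i) ∈ {y | c - y ∈ Set.Ioo (-(π / 2)) (π / 2)} := fun x hx => by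
    have := sum_arctan_le_card_mul x
    constructor <;> simp only [Set.mem_ofPred_eq] at hx ⊢ <;> linarith
  have hcos : ∀ y ∈ {y | c - y ∈ Set.Ioo (-(π / 2)) (π / 2)}, cos (c - y) ≠ 0 :=
    fun y hy => (cos_pos_of_mem_Ioo hy).ne'
  have hG : ∀ y ∈ {y | c - y ∈ Set.Ioo (-(π / 2)) (π / 2)},
      HasDerivAt (fun y => tan (c - y)) (-(1 + tan (c - y) ^ 2)) y := fun y hy => by
    refine ((hasDerivAt_tan (hcos y hy)).comp y ((hasDerivAt_id y).const_sub c)).congr_deriv ?_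
    rw [← inv_one_add_tan_sq (hcos y hy)]
    simp
  refine convexOn_comp_sum_arctan hD hU hG (fun y hy => ?_) (fun y _ => by nlinarith)
    (μ := fun y => tan (c - y)) fun y hy => ?_
  · exact (((hG y hy).fun_pow 2).const_add 1).neg.congr_deriv (by ring)
  · rw [arctan_tan hy.1 hy.2]
    linarith

theorem convex_setOf_lt_of_convex_setOf_le {𝕜 E β : Type*} [Semiring 𝕜] [PartialOrder 𝕜]
    [AddCommMonoid E] [Module 𝕜 E] [LinearOrder β] {f : E → β} {c : β}
    (h : ∀ c', c < c' → Convex 𝕜 {x | c' ≤ f x}) : Convex 𝕜 {x | c < f x} := by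
  intro x hx y hy a b ha hb hab
  have hmin : c < min (f x) (f y) := lt_min hx hy
  exact hmin.trans_le (h _ hmin (min_le_left _ _) (min_le_right _ _) ha hb hab)

theorem Real.le_arctan_iff {θ x : ℝ} (hθ : -(π / 2) < θ) :
    θ ≤ arctan x ↔ θ < π / 2 ∧ tan θ ≤ x := by
  constructor
  · intro h
    have hθ' : θ < π / 2 := h.trans_lt (arctan_lt_pi_div_two x)
    exact ⟨hθ', by rwa [← arctan_le_arctan_iff, arctan_tan hθ hθ']⟩
  · rintro ⟨hθ', h⟩
    rwa [← arctan_le_arctan_iff, arctan_tan hθ hθ'] at h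

theorem convex_setOf_le_sum_arctan (n : ℕ) {c : ℝ} (hc : ((n : ℝ) - 2) * (π / 2) < c) :
    Convex ℝ {x : Fin n → ℝ | c ≤ ∑ i, arctan (x i)} := by
  induction n generalizing c with
  | zero =>
    by_cases hc0 : c ≤ 0 <;> simp [hc0, convex_univ, convex_empty]
  | succ n ih =>
    push_cast at hc
    have hD : Convex ℝ {z : Fin n → ℝ | c - π / 2 < ∑ i, arctan (z i)} :=
      convex_setOf_lt_of_convex_setOf_le fun c' hc' => ih (by linarith)
    have hφ := convexOn_tan_sub_sum_arctan (by rw [Fintype.card_fin]; linarith) hD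
    suffices hS : {x : Fin (n + 1) → ℝ | c ≤ ∑ i, arctan (x i)} =
        (LinearMap.funLeft ℝ ℝ Fin.succ).prod (LinearMap.proj 0) ⁻¹'
          {p | p.1 ∈ {z | c - π / 2 < ∑ i, arctan (z i)} ∧ tan (c - ∑ i, arctan (p.1 i)) ≤ p.2} by
      rw [hS]; exact hφ.convex_epigraph.linear_preimage _
    ext x
    have := sum_arctan_le_card_mul (x ∘ Fin.succ)
    rw [Fintype.card_fin] at this
    simp only [Set.mem_ofPred_eq, Set.mem_preimage, LinearMap.prod_apply, LinearMap.funLeft_apply,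
      LinearMap.proj_apply, Function.prod_apply, Fin.sum_univ_succ, Function.comp_apply] at this ⊢
    rw [← sub_le_iff_le_add, le_arctan_iff (by linarith)]
    constructor <;> rintro ⟨h1, h2⟩ <;> exact ⟨by linarith, h2⟩

theorem stmt7_general (n : ℕ) (δ : ℝ) (hδ : 0 < δ) :
    ∃ A > (0 : ℝ), ConcaveOn ℝ
      {lam : Fin n → ℝ | ((n : ℝ) - 2) * (π / 2) + δ ≤ ∑ i, Real.arctan (lam i)}
      (fun lam => -Real.exp (-A * ∑ i, Real.arctan (lam i))) := by
  obtain ⟨μ, hμ, hμ_pos⟩ : ∃ μ, π / 2 - δ < arctan μ ∧ 0 < μ :=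
    (((tendsto_arctan_atTop.mono_right nhdsWithin_le_nhds).eventually
      (lt_mem_nhds (by linarith))).and (Filter.eventually_gt_atTop 0)).exists
  refine ⟨2 * μ, by positivity, ConvexOn.neg ?_⟩
  have hG : ∀ y : ℝ, HasDerivAt (fun y => exp (-(2 * μ) * y)) (-(2 * μ) * exp (-(2 * μ) * y)) y :=
    fun y => (((hasDerivAt_id y).const_mul _).exp).congr_deriv (by simp [mul_comm])
  refine convexOn_comp_sum_arctan (convex_setOf_le_sum_arctan n (by linarith)) (U := Set.Ici _)
    (fun x hx => hx) (fun y _ => hG y) (fun y _ => ((hG y).const_mul _).congr_deriv ?_)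
    (fun y _ => ?_) (μ := fun _ => μ) fun y hy => ?_
  · ring
  · have := exp_pos (-(2 * μ) * y); nlinarith
  · simp only [Fintype.card_fin, Set.mem_Ici] at hy ⊢; linarith

theorem stmt7 (n : ℕ) (hn : 2 ≤ n) (δ : ℝ) (hδ : 0 < δ) :
    ∃ A > (0 : ℝ), ConcaveOn ℝ
      {lam : Fin n → ℝ | ((n : ℝ) - 2) * (π / 2) + δ ≤ ∑ i, Real.arctan (lam i)}
      (fun lam => -Real.exp (-A * ∑ i, Real.arctan (lam i))) :=
  stmt7_general n δ hδ
end

section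
/- Consider the n × n symmetric matrix M(a) with diagonal entries d₁, …, d_{n−1}, a, last row/column off-diagonal entries a₁, …, a_{n−1} with |aᵢ| ≤ C, and zeros elsewhere. As |a| → ∞, the eigenvalues λ₁(a), …, λₙ(a) of M(a) satisfy λ_α(a) = d_α + o(1) for α ≤ n−1 and λₙ(a) = a(1 + O(1/a)), with error terms uniform in d₁, …, d_{n−1} and C. In particular, for every ε > 0 there exists R depending only on d₁, …, d_{n−1}, C, ε such that if |a| ≥ R then each of the n−1 'small' eigenvalues differs from the corresponding d_α by at most ε. -/
/-!
Order the eigenvalues decreasingly as `ν₀ ≥ ⋯ ≥ νₘ`. The arrowhead matrix is diagonal on the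
first `m` coordinates, so Courant–Fischer applied to coordinate subspaces gives Cauchy interlacing
`ν_{α+1} ≤ d_α ≤ ν_α`. On a coordinate subspace that contains the last coordinate, the cross terms
`2 y aᵢ xᵢ` cost at most `ε ‖x‖² + m C² y² / ε`, which the diagonal entry `a y²` absorbs once
`|a|` is large; this upgrades the interlacing to `d_α - ε ≤ ν_{α+1}` when `a ≫ 0` and to
`ν_α ≤ d_α + ε` when `a ≪ 0`. The single eigenvalue that escapes is then `ν₀` or `νₘ`.
-/

open Real Finset

open Module Matrix
open scoped RealInnerProductSpace

section Orthonormal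

variable {ι E : Type*} [NormedAddCommGroup E] [InnerProductSpace ℝ E]

lemma Orthonormal.inner_eq_zero_of_mem_span_image {u : ι → E} (hu : Orthonormal ℝ u)
    {S : Set ι} {v : E} (hv : v ∈ Submodule.span ℝ (u '' S)) {i : ι} (hi : i ∉ S) :
    ⟪u i, v⟫ = 0 := by
  obtain ⟨l, hl, rfl⟩ := Finsupp.mem_span_image_iff_linearCombination ℝ |>.1 hv
  rw [hu.inner_right_finsupp]
  exact Finsupp.notMem_support_iff.1 fun h => hi (hl h)

lemma Orthonormal.finrank_span_image {u : ι → E} (hu : Orthonormal ℝ u)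
    (S : Finset ι) : finrank ℝ (Submodule.span ℝ (u '' S)) = #S := by
  have := finrank_span_eq_card
    (hu.linearIndependent.comp _ (Subtype.val_injective (p := (· ∈ S))))
  rwa [Set.range_comp, Subtype.range_coe_subtype, Fintype.card_coe] at this

variable [FiniteDimensional ℝ E]

lemma OrthonormalBasis.exists_mem_ne_zero_forall_inner_eq_zero [Fintype ι]
    (b : OrthonormalBasis ι ℝ E) {V : Submodule ℝ E} {S : Finset ι}
    (hcard : finrank ℝ E < finrank ℝ V + #S) :
    ∃ v ∈ V, v ≠ 0 ∧ ∀ i ∉ S, ⟪b i, v⟫ = 0 := by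
  have hW : ¬ Disjoint V (Submodule.span ℝ (b '' S)) := fun h => by
    have := Submodule.finrank_add_finrank_le_of_disjoint h
    rw [b.orthonormal.finrank_span_image] at this
    omega
  obtain ⟨v, ⟨hvV, hvW⟩, hv⟩ := Submodule.exists_mem_ne_zero_of_ne_bot (disjoint_iff.not.1 hW)
  exact ⟨v, hvV, hv, fun i hi => b.orthonormal.inner_eq_zero_of_mem_span_image hvW hi⟩

end Orthonormal

lemma Finset.Nonempty.exists_sum_mul_sq_le {ι : Type*} [Fintype ι] {S : Finset ι}
    (hS : S.Nonempty) (f c : ι → ℝ) (hc : ∀ i ∉ S, c i = 0) :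
    ∃ i ∈ S, ∑ j, f j * c j ^ 2 ≤ f i * ∑ j, c j ^ 2 := by
  obtain ⟨i, hi, hmax⟩ := S.exists_max_image f hS
  refine ⟨i, hi, ?_⟩
  rw [Finset.mul_sum]
  refine Finset.sum_le_sum fun j _ => ?_
  by_cases hj : j ∈ S
  · exact mul_le_mul_of_nonneg_right (hmax j hj) (sq_nonneg _)
  · simp [hc j hj]

lemma Finset.Nonempty.exists_le_sum_mul_sq {ι : Type*} [Fintype ι] {S : Finset ι}
    (hS : S.Nonempty) (f c : ι → ℝ) (hc : ∀ i ∉ S, c i = 0) :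
    ∃ i ∈ S, f i * ∑ j, c j ^ 2 ≤ ∑ j, f j * c j ^ 2 := by
  obtain ⟨i, hi, hle⟩ := hS.exists_sum_mul_sq_le (-f) c hc
  refine ⟨i, hi, ?_⟩
  simpa [neg_mul, Finset.sum_neg_distrib] using hle

namespace Matrix.IsHermitian

section

variable {ι : Type*} [Fintype ι] [DecidableEq ι] {M : Matrix ι ι ℝ} (hM : M.IsHermitian)

lemma inner_toEuclideanLin_self (v : EuclideanSpace ℝ ι) :
    ⟪v, toEuclideanLin M v⟫ = ∑ i, hM.eigenvalues i * ⟪hM.eigenvectorBasis i, v⟫ ^ 2 := by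
  rw [← hM.eigenvectorBasis.sum_inner_mul_inner]
  refine Finset.sum_congr rfl fun i _ => ?_
  have heig : toEuclideanLin M (hM.eigenvectorBasis i) =
      hM.eigenvalues i • hM.eigenvectorBasis i := by
    ext j; simpa using congrFun (hM.mulVec_eigenvectorBasis i) j
  rw [← isSymmetric_toEuclideanLin_iff.2 hM, heig, real_inner_smul_left, real_inner_comm]
  ring

lemma exists_mem_ne_zero_rayleigh {V : Submodule ℝ (EuclideanSpace ℝ ι)} {S : Finset ι}
    (hcard : Fintype.card ι < finrank ℝ V + #S) :
    ∃ v ∈ V, v ≠ 0 ∧ (∃ i ∈ S, ⟪v, toEuclideanLin M v⟫ ≤ hM.eigenvalues i * ‖v‖ ^ 2) ∧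
      ∃ i ∈ S, hM.eigenvalues i * ‖v‖ ^ 2 ≤ ⟪v, toEuclideanLin M v⟫ := by
  set u := hM.eigenvectorBasis
  obtain ⟨v, hvV, hv0, hvS⟩ :=
    u.exists_mem_ne_zero_forall_inner_eq_zero (by rwa [finrank_euclideanSpace])
  have hS : S.Nonempty := by
    have := V.finrank_le
    rw [finrank_euclideanSpace] at this
    exact Finset.card_pos.1 (by omega)
  refine ⟨v, hvV, hv0, ?_⟩
  rw [hM.inner_toEuclideanLin_self, ← u.sum_sq_inner_right]
  exact ⟨hS.exists_sum_mul_sq_le _ _ hvS, hS.exists_le_sum_mul_sq _ _ hvS⟩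

end

section

variable {n : ℕ} {M : Matrix (Fin n) (Fin n) ℝ} (hM : M.IsHermitian) {σ : Equiv.Perm (Fin n)}
  {V : Submodule ℝ (EuclideanSpace ℝ (Fin n))} {t : ℝ}

lemma le_eigenvalues_of_forall_le_inner (hσ : Antitone (hM.eigenvalues ∘ σ)) {k : Fin n}
    (hk : k < finrank ℝ V)
    (hV : ∀ v ∈ V, t * ‖v‖ ^ 2 ≤ ⟪v, toEuclideanLin M v⟫) : t ≤ hM.eigenvalues (σ k) := by
  obtain ⟨v, hvV, hv0, ⟨i, hi, hle⟩, -⟩ :=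
    hM.exists_mem_ne_zero_rayleigh (V := V) (S := (Ici k).map σ.toEmbedding)
      (by simp only [Fintype.card_fin, card_map, Fin.card_Ici]; omega)
  obtain ⟨j, hj, rfl⟩ := mem_map.1 hi
  exact (le_of_mul_le_mul_right ((hV v hvV).trans hle) (pow_pos (norm_pos_iff.2 hv0) 2)).trans
    (hσ (mem_Ici.1 hj))

lemma eigenvalues_le_of_forall_inner_le (hσ : Antitone (hM.eigenvalues ∘ σ)) {k : Fin n}
    (hk : n ≤ k + finrank ℝ V)
    (hV : ∀ v ∈ V, ⟪v, toEuclideanLin M v⟫ ≤ t * ‖v‖ ^ 2) : hM.eigenvalues (σ k) ≤ t := by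
  obtain ⟨v, hvV, hv0, -, i, hi, hle⟩ :=
    hM.exists_mem_ne_zero_rayleigh (V := V) (S := (Iic k).map σ.toEmbedding)
      (by simp only [Fintype.card_fin, card_map, Fin.card_Iic]; omega)
  obtain ⟨j, hj, rfl⟩ := mem_map.1 hi
  exact (hσ (mem_Iic.1 hj)).trans
    (le_of_mul_le_mul_right (hle.trans (hV v hvV)) (pow_pos (norm_pos_iff.2 hv0) 2))

end

end Matrix.IsHermitian

lemma Tuple.exists_perm_antitone_comp {α : Type*} [LinearOrder α] {n : ℕ} (f : Fin n → α) :
    ∃ σ : Equiv.Perm (Fin n), Antitone (f ∘ σ) :=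
  ⟨Fin.revPerm.trans (Tuple.sort f), (Tuple.monotone_sort f).comp_antitone Fin.rev_anti⟩

namespace EuclideanSpace

variable {ι : Type*} [Fintype ι]

lemma finrank_span_basisFun_image [DecidableEq ι] (T : Finset ι) :
    finrank ℝ (Submodule.span ℝ (basisFun ι ℝ '' T)) = #T :=
  (basisFun ι ℝ).orthonormal.finrank_span_image T

lemma apply_eq_zero_of_mem_span_basisFun_image {T : Set ι} {v : EuclideanSpace ℝ ι}
    (hv : v ∈ Submodule.span ℝ (basisFun ι ℝ '' T)) {j : ι} (hj : j ∉ T) : v j = 0 := by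
  rw [← basisFun_inner]
  exact (basisFun ι ℝ).orthonormal.inner_eq_zero_of_mem_span_image hv hj

lemma norm_sq_eq_sum_castSucc {m : ℕ} (v : EuclideanSpace ℝ (Fin (m + 1))) :
    ‖v‖ ^ 2 = ∑ i : Fin m, v i.castSucc ^ 2 + v (Fin.last m) ^ 2 := by
  rw [real_norm_sq_eq, Fin.sum_univ_castSucc]

end EuclideanSpace

lemma Finset.sum_mul_sq_le_sum_mul_sq {ι : Type*} (s : Finset ι) {x f g : ι → ℝ}
    (h : ∀ i ∈ s, x i ≠ 0 → f i ≤ g i) : ∑ i ∈ s, f i * x i ^ 2 ≤ ∑ i ∈ s, g i * x i ^ 2 := by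
  refine Finset.sum_le_sum fun i hi => ?_
  by_cases hx : x i = 0
  · simp [hx]
  · exact mul_le_mul_of_nonneg_right (h i hi hx) (sq_nonneg _)

lemma neg_le_two_mul_sum_mul {ι : Type*} [Fintype ι] {b : ι → ℝ} {C ε : ℝ}
    (hb : ∀ i, |b i| ≤ C) (hε : 0 < ε) (x : ι → ℝ) (y : ℝ) :
    -(ε * ∑ i, x i ^ 2 + Fintype.card ι * C ^ 2 / ε * y ^ 2) ≤ 2 * y * ∑ i, b i * x i := by
  have hterm : ∀ i, -(ε * x i ^ 2 + C ^ 2 / ε * y ^ 2) ≤ 2 * y * (b i * x i) := fun i => by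
    have hb2 : b i ^ 2 ≤ C ^ 2 := by
      simpa only [sq_abs] using pow_le_pow_left₀ (abs_nonneg _) (hb i) 2
    have hsq : (ε * x i + b i * y) ^ 2 / ε =
        ε * x i ^ 2 + 2 * y * (b i * x i) + b i ^ 2 / ε * y ^ 2 := by
      field_simp
      ring
    have : b i ^ 2 / ε * y ^ 2 ≤ C ^ 2 / ε * y ^ 2 := by gcongr
    nlinarith [div_nonneg (sq_nonneg (ε * x i + b i * y)) hε.le]
  calc -(ε * ∑ i, x i ^ 2 + Fintype.card ι * C ^ 2 / ε * y ^ 2)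
      = ∑ i, -(ε * x i ^ 2 + C ^ 2 / ε * y ^ 2) := by
        simp only [Finset.sum_neg_distrib, Finset.sum_add_distrib, ← Finset.mul_sum,
          Finset.sum_const, Finset.card_univ, nsmul_eq_mul]
        ring
    _ ≤ ∑ i, 2 * y * (b i * x i) := Finset.sum_le_sum fun i _ => hterm i
    _ = 2 * y * ∑ i, b i * x i := (Finset.mul_sum ..).symm

variable {m : ℕ}

-- An `abbrev`, so that it is reducibly the matrix written out in `stmt16`.
abbrev arrowhead (d b : Fin m → ℝ) (a : ℝ) : Matrix (Fin (m + 1)) (Fin (m + 1)) ℝ :=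
  Matrix.of fun i j =>
    Fin.lastCases (Fin.lastCases a b j)
      (fun i' => Fin.lastCases (b i') (fun j' => if i' = j' then d i' else 0) j) i

section

variable (d b : Fin m → ℝ) (a : ℝ)

lemma arrowhead_neg : arrowhead (-d) (-b) (-a) = -arrowhead d b a := by
  ext i j
  induction i using Fin.lastCases <;> induction j using Fin.lastCases <;>
    simp [arrowhead]
  split_ifs <;> simp_all

lemma arrowhead_mulVec_castSucc (x : Fin (m + 1) → ℝ) (i : Fin m) :
    (arrowhead d b a *ᵥ x) i.castSucc = d i * x i.castSucc + b i * x (Fin.last m) := by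
  simp [arrowhead, mulVec, dotProduct, Fin.sum_univ_castSucc]

lemma arrowhead_mulVec_last (x : Fin (m + 1) → ℝ) :
    (arrowhead d b a *ᵥ x) (Fin.last m) = ∑ i, b i * x i.castSucc + a * x (Fin.last m) := by
  simp [arrowhead, mulVec, dotProduct, Fin.sum_univ_castSucc]

lemma inner_toEuclideanLin_arrowhead (v : EuclideanSpace ℝ (Fin (m + 1))) :
    ⟪v, toEuclideanLin (arrowhead d b a) v⟫ = ∑ i, d i * v i.castSucc ^ 2 +
      2 * v (Fin.last m) * ∑ i, b i * v i.castSucc + a * v (Fin.last m) ^ 2 := by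
  have hrows : ∑ i, (d i * v i.castSucc + b i * v (Fin.last m)) * v i.castSucc =
      ∑ i, d i * v i.castSucc ^ 2 + v (Fin.last m) * ∑ i, b i * v i.castSucc := by
    rw [Finset.mul_sum, ← Finset.sum_add_distrib]
    exact Finset.sum_congr rfl fun i _ => by ring
  rw [EuclideanSpace.inner_eq_star_dotProduct, toLpLin_apply]
  simp only [dotProduct, Pi.star_apply, Fin.sum_univ_castSucc, arrowhead_mulVec_castSucc,
    arrowhead_mulVec_last, star_trivial, hrows]
  ring

end

section

variable {d b : Fin m → ℝ} {a C ε t : ℝ}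

lemma le_inner_toEuclideanLin_arrowhead (hb : ∀ i, |b i| ≤ C) (hε : 0 < ε)
    {v : EuclideanSpace ℝ (Fin (m + 1))} (hv : ∀ i, v i.castSucc ≠ 0 → t ≤ d i)
    (ha : t - ε + m * C ^ 2 / ε ≤ a) :
    (t - ε) * ‖v‖ ^ 2 ≤ ⟪v, toEuclideanLin (arrowhead d b a) v⟫ := by
  rw [inner_toEuclideanLin_arrowhead, EuclideanSpace.norm_sq_eq_sum_castSucc]
  have hdiag : t * ∑ i : Fin m, v i.castSucc ^ 2 ≤ ∑ i, d i * v i.castSucc ^ 2 := by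
    rw [Finset.mul_sum]
    exact Finset.sum_mul_sq_le_sum_mul_sq _ fun i _ => hv i
  have hcross := neg_le_two_mul_sum_mul hb hε (fun i : Fin m => v i.castSucc) (v (Fin.last m))
  have hlast := mul_le_mul_of_nonneg_right ha (sq_nonneg (v (Fin.last m)))
  rw [Fintype.card_fin] at hcross
  linarith

lemma inner_toEuclideanLin_arrowhead_le (hb : ∀ i, |b i| ≤ C) (hε : 0 < ε)
    {v : EuclideanSpace ℝ (Fin (m + 1))} (hv : ∀ i, v i.castSucc ≠ 0 → d i ≤ t)
    (ha : a ≤ t + ε - m * C ^ 2 / ε) :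
    ⟪v, toEuclideanLin (arrowhead d b a) v⟫ ≤ (t + ε) * ‖v‖ ^ 2 := by
  have := le_inner_toEuclideanLin_arrowhead (d := -d) (b := -b) (a := -a) (t := -t)
    (by simpa using hb) hε (v := v) (fun i hi => neg_le_neg (hv i hi)) (by linarith)
  rw [arrowhead_neg, map_neg, LinearMap.neg_apply, inner_neg_right] at this
  linarith

lemma inner_toEuclideanLin_arrowhead_of_last_eq_zero {v : EuclideanSpace ℝ (Fin (m + 1))}
    (hv : v (Fin.last m) = 0) :
    ⟪v, toEuclideanLin (arrowhead d b a) v⟫ = ∑ i, d i * v i.castSucc ^ 2 := by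
  simp [inner_toEuclideanLin_arrowhead, hv]

end

namespace Matrix.IsHermitian

open EuclideanSpace

variable {d b : Fin m → ℝ} {a C ε : ℝ} (hM : (arrowhead d b a).IsHermitian)
  {σ : Equiv.Perm (Fin (m + 1))}

lemma arrowhead_eigenvalues_succ_le (hσ : Antitone (hM.eigenvalues ∘ σ)) (hd : Antitone d)
    (α : Fin m) : hM.eigenvalues (σ α.succ) ≤ d α := by
  refine hM.eigenvalues_le_of_forall_inner_le hσ
    (V := Submodule.span ℝ (basisFun _ ℝ '' ↑(Ico α.castSucc (Fin.last m)))) ?_ fun v hv => ?_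
  · rw [finrank_span_basisFun_image, Fin.card_Ico]
    simp only [Fin.val_succ, Fin.val_last, Fin.val_castSucc]
    omega
  · have hlast : v (Fin.last m) = 0 := apply_eq_zero_of_mem_span_basisFun_image hv (by simp)
    rw [inner_toEuclideanLin_arrowhead_of_last_eq_zero hlast, norm_sq_eq_sum_castSucc, hlast,
      zero_pow two_ne_zero, add_zero, Finset.mul_sum]
    refine Finset.sum_mul_sq_le_sum_mul_sq _ fun i _ hi => hd ?_
    by_contra h
    exact hi (apply_eq_zero_of_mem_span_basisFun_image hv (by simpa using h))

lemma le_arrowhead_eigenvalues_castSucc (hσ : Antitone (hM.eigenvalues ∘ σ)) (hd : Antitone d)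
    (α : Fin m) : d α ≤ hM.eigenvalues (σ α.castSucc) := by
  refine hM.le_eigenvalues_of_forall_le_inner hσ
    (V := Submodule.span ℝ (basisFun _ ℝ '' ↑(Iic α.castSucc))) ?_ fun v hv => ?_
  · rw [finrank_span_basisFun_image, Fin.card_Iic]
    simp
  · have hlast : v (Fin.last m) = 0 := apply_eq_zero_of_mem_span_basisFun_image hv (by simp)
    rw [inner_toEuclideanLin_arrowhead_of_last_eq_zero hlast, norm_sq_eq_sum_castSucc, hlast,
      zero_pow two_ne_zero, add_zero, Finset.mul_sum]
    refine Finset.sum_mul_sq_le_sum_mul_sq _ fun i _ hi => hd ?_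
    by_contra h
    exact hi (apply_eq_zero_of_mem_span_basisFun_image hv (by simpa using h))

lemma sub_le_arrowhead_eigenvalues_succ (hσ : Antitone (hM.eigenvalues ∘ σ)) (hd : Antitone d)
    (hb : ∀ i, |b i| ≤ C) (hε : 0 < ε) (α : Fin m) (ha : d α - ε + m * C ^ 2 / ε ≤ a) :
    d α - ε ≤ hM.eigenvalues (σ α.succ) := by
  refine hM.le_eigenvalues_of_forall_le_inner hσ
    (V := Submodule.span ℝ (basisFun _ ℝ '' ↑(insert (Fin.last m) (Iic α.castSucc)))) ?_
    fun v hv => le_inner_toEuclideanLin_arrowhead hb hε (fun i hi => hd ?_) ha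
  · rw [finrank_span_basisFun_image, card_insert_of_notMem (by simp), Fin.card_Iic]
    simp
  · by_contra h
    exact hi (apply_eq_zero_of_mem_span_basisFun_image hv (by simpa using h))

lemma arrowhead_eigenvalues_castSucc_le (hσ : Antitone (hM.eigenvalues ∘ σ)) (hd : Antitone d)
    (hb : ∀ i, |b i| ≤ C) (hε : 0 < ε) (α : Fin m) (ha : a ≤ d α + ε - m * C ^ 2 / ε) :
    hM.eigenvalues (σ α.castSucc) ≤ d α + ε := by
  refine hM.eigenvalues_le_of_forall_inner_le hσ
    (V := Submodule.span ℝ (basisFun _ ℝ '' ↑(Ici α.castSucc))) ?_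
    fun v hv => inner_toEuclideanLin_arrowhead_le hb hε (fun i hi => hd ?_) ha
  · rw [finrank_span_basisFun_image, Fin.card_Ici]
    simp only [Fin.val_castSucc]
    omega
  · by_contra h
    exact hi (apply_eq_zero_of_mem_span_basisFun_image hv (by simpa using h))

end Matrix.IsHermitian

theorem stmt16_general (m : ℕ) (d : Fin m → ℝ) (hd : Antitone d) (C : ℝ)
    (ε : ℝ) (hε : 0 < ε) :
    ∃ R > (0 : ℝ), ∀ (a : ℝ) (av : Fin m → ℝ), (∀ i, |av i| ≤ C) → R ≤ |a| →
      ∀ hM : (Matrix.of fun i j : Fin (m + 1) =>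
          Fin.lastCases (motive := fun _ => ℝ)
            (Fin.lastCases (motive := fun _ => ℝ) a (fun j' : Fin m => av j') j)
            (fun i' => Fin.lastCases (motive := fun _ => ℝ) (av i')
              (fun j' => if i' = j' then d i' else 0) j) i).IsHermitian,
        ∃ σ : Equiv.Perm (Fin (m + 1)), ∀ α : Fin m,
          |hM.eigenvalues (σ α.castSucc) - d α| ≤ ε := by
  refine ⟨‖d‖ + m * C ^ 2 / ε + 1, by positivity, fun a av hav haR hM => ?_⟩
  obtain ⟨σ, hσ⟩ := Tuple.exists_perm_antitone_comp hM.eigenvalues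
  have hdR : ∀ α, |d α| ≤ ‖d‖ := norm_le_pi_norm d
  rcases le_or_gt 0 a with ha | ha
  · have hshift : ∀ α : Fin m, (σ * finRotate (m + 1)) α.castSucc = σ α.succ := fun α => by
      simp [finRotate_apply, Fin.coeSucc_eq_succ]
    refine ⟨σ * finRotate (m + 1), fun α => abs_le.2 ⟨?_, ?_⟩⟩ <;> rw [hshift]
    · have := abs_le.1 (hdR α)
      linarith [hM.sub_le_arrowhead_eigenvalues_succ hσ hd hav hε α
        (by rw [abs_of_nonneg ha] at haR; linarith)]
    · linarith [hM.arrowhead_eigenvalues_succ_le hσ hd α]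
  · refine ⟨σ, fun α => abs_le.2 ⟨?_, ?_⟩⟩
    · linarith [hM.le_arrowhead_eigenvalues_castSucc hσ hd α]
    · have := abs_le.1 (hdR α)
      linarith [hM.arrowhead_eigenvalues_castSucc_le hσ hd hav hε α
        (by rw [abs_of_neg ha] at haR; linarith)]

theorem stmt16 (m : ℕ) (d : Fin m → ℝ) (hd : Antitone d) (C : ℝ) (hC : 0 < C)
    (ε : ℝ) (hε : 0 < ε) :
    ∃ R > (0 : ℝ), ∀ (a : ℝ) (av : Fin m → ℝ), (∀ i, |av i| ≤ C) → R ≤ |a| →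
      ∀ hM : (Matrix.of fun i j : Fin (m + 1) =>
          Fin.lastCases (motive := fun _ => ℝ)
            (Fin.lastCases (motive := fun _ => ℝ) a (fun j' : Fin m => av j') j)
            (fun i' => Fin.lastCases (motive := fun _ => ℝ) (av i')
              (fun j' => if i' = j' then d i' else 0) j) i).IsHermitian,
        ∃ σ : Equiv.Perm (Fin (m + 1)), ∀ α : Fin m,
          |hM.eigenvalues (σ α.castSucc) - d α| ≤ ε :=
  stmt16_general m d hd C ε hε
end
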